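/- Fix real numbers ρ and ω and regard P and S as polynomials in the three variables (h, h₊, c); let P(h,h,c) and S(h,h,c) denote the polynomials obtained by substituting h₊ = h. Then in the polynomial ring ℝ[h, h₊, c] the product (h₊ − h)·P(h,h,c) divides 2(h−1)h·(S(h,h₊,c)·P(h,h,c) − S(h,h,c)·P(h,h₊,c)); equivalently, there is a unique polynomial S̃(h,h₊,c) ∈ ℝ[h,h₊,c] with (h₊−h)·P(h,h,c)·S̃(h,h₊,c) = 2(h−1)h·(S(h,h₊,c)P(h,h,c) − S(h,h,c)P(h,h₊,c)). (Uniqueness holds because P(h,h,c) is not the zero polynomial.) -/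

import Mathlib

open MvPolynomial

/-- The conjugate-flow polynomial `P(h, h₊, c)` as a polynomial in the three
variables `h = X 0`, `h₊ = X 1`, `c = X 2`, with real parameters ρ, ω. -/
noncomputable def Ppoly (ρ ω : ℝ) : MvPolynomial (Fin 3) ℝ :=
  C ω ^ 2 * X 1 ^ 2 * (X 1 - X 0) * (2 - X 1 - X 0) ^ 2 * C ρ
    + 4 * X 1 ^ 2 * (2 * X 1 ^ 2 - X 2 ^ 2 * X 1 - 4 * X 1 - X 2 ^ 2 * X 0
        + 2 * X 2 ^ 2 + 2) * C ρ
    + 4 * X 2 * C ω * (1 - X 0) * X 1 ^ 2 * (2 - X 1 - X 0) * C ρ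
    - 4 * (1 - X 1) ^ 2 * (2 * X 1 ^ 2 - X 2 ^ 2 * X 1 - X 2 ^ 2 * X 0)

/-- The flow-force conjugate-flow polynomial `S(h, h₊, c)`. -/
noncomputable def Spoly (ρ ω : ℝ) : MvPolynomial (Fin 3) ℝ :=
  C ω ^ 2 * X 1 * (X 1 - X 0) * (X 1 + 3 * X 0 - 4) * C ρ
    + 12 * X 1 * (X 1 - X 2 ^ 2 - 1) * C ρ
    + 12 * X 2 * C ω * (X 0 - 1) * X 1 * C ρ
    - 12 * (X 1 - 1) * (X 1 - X 2 ^ 2)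

/-- Substitution of `h₊ = h`, i.e. `X 1 ↦ X 0`. -/
noncomputable def diagSub : MvPolynomial (Fin 3) ℝ →ₐ[ℝ] MvPolynomial (Fin 3) ℝ :=
  aeval ![X 0, X 0, X 2]

/-! On the diagonal `h₊ = h` both conjugate-flow polynomials are multiples of one factor
`Q = diagFactor`: `P(h,h,c) = 8h(1-h)Q` and `S(h,h,c) = -12Q`. Hence the right-hand side equals
`8(h-1)hQ · (2h(1-h)S + 3P)`, and `2h(1-h)S + 3P` vanishes on the diagonal, so it is divisible
by `h₊ - h` and `S̃ = -(2h(1-h)S + 3P)/(h₊ - h)`. Uniqueness holds because `ℝ[h,h₊,c]` is a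
domain and `P(h,h,c) ≠ 0`. -/

namespace MvPolynomial

theorem dvd_aeval_sub_aeval {R S σ : Type*} [CommSemiring R] [CommRing S] [Algebra R S]
    {d : S} {f g : σ → S} (hfg : ∀ i, d ∣ f i - g i) (p : MvPolynomial σ R) :
    d ∣ aeval f p - aeval g p := by
  let π := Ideal.Quotient.mkₐ R (Ideal.span {d})
  have hπ : (fun i ↦ π (f i)) = fun i ↦ π (g i) := by
    funext i
    exact Ideal.Quotient.eq.mpr (Ideal.mem_span_singleton.mpr (hfg i))
  rw [← Ideal.mem_span_singleton, ← Ideal.Quotient.eq, ← Ideal.Quotient.mkₐ_eq_mk R,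
    comp_aeval_apply, comp_aeval_apply, hπ]

end MvPolynomial

open MvPolynomial

@[simp] theorem diagSub_C (a : ℝ) : diagSub (C a) = C a := aeval_C _ a
@[simp] theorem diagSub_X_zero : diagSub (X 0) = X 0 := aeval_X _ 0
@[simp] theorem diagSub_X_one : diagSub (X 1) = X 0 := aeval_X _ 1
@[simp] theorem diagSub_X_two : diagSub (X 2) = X 2 := aeval_X _ 2

theorem X_one_sub_X_zero_dvd_sub_diagSub (p : MvPolynomial (Fin 3) ℝ) :
    X 1 - X 0 ∣ p - diagSub p := by
  have hX : ∀ i, (X 1 - X 0 : MvPolynomial (Fin 3) ℝ) ∣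
      X i - (![X 0, X 0, X 2] : Fin 3 → MvPolynomial (Fin 3) ℝ) i := by
    intro i
    fin_cases i <;> simp
  have h := dvd_aeval_sub_aeval (R := ℝ) hX p
  rwa [aeval_X_left_apply] at h

noncomputable def diagFactor (ρ ω : ℝ) : MvPolynomial (Fin 3) ℝ :=
  X 0 * (1 - X 0) * C ρ + X 2 ^ 2 * X 0 * C ρ + X 2 * C ω * C ρ * X 0 * (1 - X 0)
    - (1 - X 0) * (X 0 - X 2 ^ 2)

theorem diagFactor_ne_zero (ρ ω : ℝ) : diagFactor ρ ω ≠ 0 := by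
  intro h
  simpa [diagFactor] using congrArg (eval ![0, 0, 1]) h

theorem diagSub_Ppoly (ρ ω : ℝ) :
    diagSub (Ppoly ρ ω) = 8 * X 0 * (1 - X 0) * diagFactor ρ ω := by
  simp only [Ppoly, diagFactor, map_sub, map_add, map_mul, map_pow, map_ofNat, map_one,
    diagSub_C, diagSub_X_zero, diagSub_X_one, diagSub_X_two]
  ring

theorem diagSub_Spoly (ρ ω : ℝ) : diagSub (Spoly ρ ω) = -12 * diagFactor ρ ω := by
  simp only [Spoly, diagFactor, map_sub, map_add, map_mul, map_pow, map_ofNat, map_one,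
    diagSub_C, diagSub_X_zero, diagSub_X_one, diagSub_X_two]
  ring

theorem diagSub_Ppoly_ne_zero (ρ ω : ℝ) : diagSub (Ppoly ρ ω) ≠ 0 := by
  have h1 : (1 - X 0 : MvPolynomial (Fin 3) ℝ) ≠ 0 := fun h ↦ by
    simpa using congrArg (eval 0) h
  rw [diagSub_Ppoly]
  exact mul_ne_zero (mul_ne_zero (mul_ne_zero (by norm_num) (X_ne_zero 0)) h1)
    (diagFactor_ne_zero ρ ω)

noncomputable def flowForceNumerator (ρ ω : ℝ) : MvPolynomial (Fin 3) ℝ :=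
  2 * X 0 * (1 - X 0) * Spoly ρ ω + 3 * Ppoly ρ ω

theorem diagSub_flowForceNumerator (ρ ω : ℝ) : diagSub (flowForceNumerator ρ ω) = 0 := by
  simp only [flowForceNumerator, map_add, map_mul, map_sub, map_one, map_ofNat, diagSub_X_zero,
    diagSub_Ppoly, diagSub_Spoly]
  ring

theorem X_one_sub_X_zero_dvd_flowForceNumerator (ρ ω : ℝ) :
    X 1 - X 0 ∣ flowForceNumerator ρ ω := by
  simpa only [diagSub_flowForceNumerator, sub_zero] using
    X_one_sub_X_zero_dvd_sub_diagSub (flowForceNumerator ρ ω)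

/-- Existence and uniqueness of the desingularized flow-force polynomial `S̃`:
`(h₊ − h)·P(h,h,c)` divides `2(h−1)h·(S(h,h₊,c)P(h,h,c) − S(h,h,c)P(h,h₊,c))`
in `ℝ[h,h₊,c]`; equivalently there is a unique polynomial `S̃` with
`(h₊−h)·P(h,h,c)·S̃ = 2(h−1)h·(S(h,h₊,c)P(h,h,c) − S(h,h,c)P(h,h₊,c))`. -/
theorem desingularized_flow_force_polynomial (ρ ω : ℝ) :
    ((X 1 - X 0) * diagSub (Ppoly ρ ω) ∣
      2 * (X 0 - 1) * X 0 *
        (Spoly ρ ω * diagSub (Ppoly ρ ω) - diagSub (Spoly ρ ω) * Ppoly ρ ω)) ∧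
    (∃! St : MvPolynomial (Fin 3) ℝ,
      (X 1 - X 0) * diagSub (Ppoly ρ ω) * St =
        2 * (X 0 - 1) * X 0 *
          (Spoly ρ ω * diagSub (Ppoly ρ ω) - diagSub (Spoly ρ ω) * Ppoly ρ ω)) := by
  obtain ⟨T, hT⟩ := X_one_sub_X_zero_dvd_flowForceNumerator ρ ω
  have key : (X 1 - X 0) * diagSub (Ppoly ρ ω) * -T =
      2 * (X 0 - 1) * X 0 *
        (Spoly ρ ω * diagSub (Ppoly ρ ω) - diagSub (Spoly ρ ω) * Ppoly ρ ω) := by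
    rw [diagSub_Ppoly, diagSub_Spoly]
    unfold flowForceNumerator at hT
    linear_combination (8 * X 0 * (1 - X 0) * diagFactor ρ ω) * hT
  have hA : (X 1 - X 0) * diagSub (Ppoly ρ ω) ≠ 0 :=
    mul_ne_zero (sub_ne_zero.mpr (X_injective.ne (by decide))) (diagSub_Ppoly_ne_zero ρ ω)
  exact ⟨⟨-T, key.symm⟩, -T, key, fun St hSt ↦ mul_left_cancel₀ hA (hSt.trans key.symm)⟩
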